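/- Let w be the Rudin–Shapiro word, defined as w = g(f^ω(0)) where f : 0 ↦ 01, 1 ↦ 02, 2 ↦ 31, 3 ↦ 32 and g is the coding 0 ↦ 0, 1 ↦ 0, 2 ↦ 1, 3 ↦ 1. Then the lexicographically least word (with respect to 0 < 1) in the shift orbit closure of w is 0·w. -/

import Mathlib

/-- The prefix of length `n` of an infinite word. -/
def wordPrefix {A : Type*} (x : ℕ → A) (n : ℕ) : List A :=
  List.ofFn (fun i : Fin n => x i)

/-- A finite word is a prefix of an infinite word. -/
def IsPrefixOfWord {A : Type*} (w : List A) (x : ℕ → A) : Prop :=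
  wordPrefix x w.length = w

/-- A finite word is a factor of an infinite word. -/
def IsFactor {A : Type*} (w : List A) (x : ℕ → A) : Prop :=
  ∃ i, w = List.ofFn (fun j : Fin w.length => x (i + j))

/-- `y` belongs to the shift orbit closure of `x`. -/
def InOrbitClosure {A : Type*} (y x : ℕ → A) : Prop :=
  ∀ w, IsFactor w y → IsFactor w x

/-- A morphism `A* → B*` applied to a finite word. -/
def applyMorphism {A B : Type*} (f : A → List B) (w : List A) : List B :=
  w.flatMap f

/-- The `n`-th iterate of a morphism applied to a finite word. -/
def applyIter {A : Type*} (f : A → List A) (n : ℕ) (w : List A) : List A :=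
  (applyMorphism f)^[n] w

/-- `y = f(x)` for infinite words: every image of a prefix of `x` is a prefix of `y`. -/
def IsWordImage {A B : Type*} (f : A → List B) (x : ℕ → A) (y : ℕ → B) : Prop :=
  ∀ n, IsPrefixOfWord (applyMorphism f (wordPrefix x n)) y

/-- Prepend a finite word to an infinite word. -/
def prepend {A : Type*} (w : List A) (x : ℕ → A) : ℕ → A :=
  fun n => if h : n < w.length then w.get ⟨n, h⟩ else x (n - w.length)

/-- Strict lexicographic order on infinite words induced by the order `r` on letters. -/
def LexLt {A : Type*} (r : A → A → Prop) (x y : ℕ → A) : Prop :=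
  ∃ n, (∀ i, i < n → x i = y i) ∧ r (x n) (y n)

def LexLe {A : Type*} (r : A → A → Prop) (x y : ℕ → A) : Prop :=
  LexLt r x y ∨ x = y

/-- `l` is the lexicographically least word (w.r.t. `r`) in the shift orbit closure
of `x` beginning with the letter `a`. -/
def IsLeastWord {A : Type*} (r : A → A → Prop) (x : ℕ → A) (a : A) (l : ℕ → A) : Prop :=
  InOrbitClosure l x ∧ l 0 = a ∧ ∀ y, InOrbitClosure y x → y 0 = a → LexLe r l y

/-- `f` is prolongable on `a` (and generates an infinite word from `a`). -/
def IsGenerating {A : Type*} (f : A → List A) (a : A) : Prop :=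
  ∃ s, f a = a :: s ∧ s ≠ [] ∧ ∀ n, applyIter f n s ≠ []

/-- `x` is the pure morphic word `f^ω(a)`. -/
def IsPureMorphic {A : Type*} (f : A → List A) (a : A) (x : ℕ → A) : Prop :=
  x 0 = a ∧ IsGenerating f a ∧ IsWordImage f x x

/-- `x` is a morphic word: the image under a coding of a pure morphic word. -/
def IsMorphic {B : Type*} (x : ℕ → B) : Prop :=
  ∃ (k : ℕ) (g : Fin k → List (Fin k)) (b : Fin k) (c : Fin k → B) (t : ℕ → Fin k),
    IsPureMorphic g b t ∧ x = c ∘ t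

/-- `f ∈ M_x`: each letter `b` has a nonempty "marker" word `p b` such that `f(y)`
begins with `p b` whenever `y ∈ S_x` begins with `b`, and the markers of distinct
letters are prefix-incomparable. -/
def MemM {A B : Type*} (f : A → List B) (x : ℕ → A) : Prop :=
  ∃ p : A → List B, (∀ b, p b ≠ []) ∧
    (∀ (b : A) (y : ℕ → A), InOrbitClosure y x → y 0 = b →
      ∃ n, p b <+: applyMorphism f (wordPrefix y n)) ∧
    (∀ a b : A, a ≠ b → ¬ p a <+: p b ∧ ¬ p b <+: p a)

/-- Every factor occurs infinitely often. -/
def Recurrent {A : Type*} (x : ℕ → A) : Prop :=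
  ∀ w, IsFactor w x → ∀ N, ∃ i, N ≤ i ∧ w = List.ofFn (fun j : Fin w.length => x (i + j))

/-- Ultimately periodic infinite word. -/
def UltimatelyPeriodic {A : Type*} (x : ℕ → A) : Prop :=
  ∃ N p, 0 < p ∧ ∀ n, N ≤ n → x (n + p) = x n

/-- The period-doubling morphism `0 ↦ 01`, `1 ↦ 00`. -/
def pdMorph : Bool → List Bool := fun b => if b then [false, false] else [false, true]

/-- The morphism `0 ↦ 0001`, `1 ↦ 0101`. -/
def gMorph : Bool → List Bool :=
  fun b => if b then [false, true, false, true] else [false, false, false, true]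

/-- The Chacon morphism `0 ↦ 0010`, `1 ↦ 1`. -/
def chMorph : Bool → List Bool := fun b => if b then [true] else [false, false, true, false]

/-- The Rudin–Shapiro morphism `0 ↦ 01`, `1 ↦ 02`, `2 ↦ 31`, `3 ↦ 32`. -/
def rsMorph : Fin 4 → List (Fin 4) := ![[0, 1], [0, 2], [3, 1], [3, 2]]

/-- The Rudin–Shapiro coding `0 ↦ 0`, `1 ↦ 0`, `2 ↦ 1`, `3 ↦ 1`. -/
def rsCoding : Fin 4 → Bool := ![false, false, true, true]

/-- The 2-bit binary representation morphism `0 ↦ 00`, `1 ↦ 01`, `2 ↦ 10`, `3 ↦ 11`. -/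
def hMorph : Fin 4 → List Bool := ![[false, false], [false, true], [true, false], [true, true]]

/-!
Both `f` and `g ∘ f` (the latter is the binary-representation morphism `hMorph`) are uniform
2-morphisms mapping letters, in increasing order, to lexicographically increasing blocks, so
they preserve the lexicographic order of infinite words. Since `0` occurs in `u = f^ω(0)` only
at even positions, induction on `t` gives `u ≤ Tᵗ u`, hence `w = g(f(u)) ≤ T²ᵗ w`.
The word `0·w` begins with `00001`, and `0000` occurs in `w` only at odd positions `i`, where
comparing `0·w` with `Tⁱ w` reduces to `w ≤ Tⁱ⁺¹ w`. So `0·w` is below every suffix of `w`,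
hence below every word of `S_w`. Finally `0·w ∈ S_w`: doubling twice turns an occurrence of a
prefix of `u` right after a letter `1` into one of four times its length, again after a `1`,
and `g 1 = 0`.
-/

open Function

section Words

variable {A : Type*}

def shift (x : ℕ → A) (i : ℕ) : ℕ → A := fun n => x (i + n)

@[simp] lemma shift_apply (x : ℕ → A) (i n : ℕ) : shift x i n = x (i + n) := rfl

lemma shift_shift (x : ℕ → A) (i j : ℕ) : shift (shift x i) j = shift x (i + j) := by
  funext n
  simp [Nat.add_assoc]

@[simp] lemma prepend_singleton_zero (a : A) (x : ℕ → A) : prepend [a] x 0 = a := rfl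

@[simp] lemma prepend_singleton_succ (a : A) (x : ℕ → A) (n : ℕ) :
    prepend [a] x (n + 1) = x n := by
  simp [prepend]

lemma wordPrefix_succ (x : ℕ → A) (n : ℕ) : wordPrefix x (n + 1) = wordPrefix x n ++ [x n] := by
  simp only [wordPrefix, List.ofFn_succ', List.concat_eq_append, Fin.val_castSucc, Fin.val_last]

lemma isFactor_iff {z : List A} {x : ℕ → A} :
    IsFactor z x ↔ ∃ i, ∀ j (hj : j < z.length), z[j] = x (i + j) := by
  refine exists_congr fun i => ⟨fun h j hj => ?_, fun h => ?_⟩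
  · rw [List.getElem_of_eq h hj, List.getElem_ofFn]
  · exact List.ext_getElem (by simp) fun j h₁ _ => by rw [List.getElem_ofFn]; exact h j h₁

lemma isFactor_wordPrefix_iff {y x : ℕ → A} {n : ℕ} :
    IsFactor (wordPrefix y n) x ↔ ∃ i, ∀ j < n, y j = x (i + j) := by
  simp [isFactor_iff, wordPrefix]

lemma inOrbitClosure_of_forall_isFactor_wordPrefix {y x : ℕ → A}
    (h : ∀ n, IsFactor (wordPrefix y n) x) : InOrbitClosure y x := by
  intro z hz
  obtain ⟨a, ha⟩ := isFactor_iff.1 hz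
  obtain ⟨i, hi⟩ := isFactor_wordPrefix_iff.1 (h (a + z.length))
  exact isFactor_iff.2 ⟨i + a, fun j hj => by rw [ha j hj, hi _ (by omega), Nat.add_assoc]⟩

lemma toLex_lt_toLex_iff [LT A] {x y : ℕ → A} :
    toLex x < toLex y ↔ ∃ p, (∀ j < p, x j = y j) ∧ x p < y p := Iff.rfl

lemma lexLe_iff_toLex_le [LinearOrder A] {x y : ℕ → A} :
    LexLe (· < ·) x y ↔ toLex x ≤ toLex y := by
  rw [le_iff_lt_or_eq, toLex_inj]
  rfl

lemma toLex_le_of_inOrbitClosure [LinearOrder A] {l x y : ℕ → A}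
    (hl : ∀ i, toLex l ≤ toLex (shift x i)) (hy : InOrbitClosure y x) :
    toLex l ≤ toLex y := by
  by_contra! hlt
  obtain ⟨p, hagree, hp⟩ := toLex_lt_toLex_iff.1 hlt
  obtain ⟨i, hi⟩ := isFactor_wordPrefix_iff.1
    (hy (wordPrefix y (p + 1)) (isFactor_wordPrefix_iff.2 ⟨0, fun j _ => by simp⟩))
  refine (hl i).not_gt (toLex_lt_toLex_iff.2 ⟨p, fun j hj => ?_, ?_⟩)
  · rw [shift_apply, ← hi j (by omega), hagree j hj]
  · rwa [shift_apply, ← hi p (by omega)]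

lemma toLex_prepend_le [LinearOrder A] {a : A} {x y : ℕ → A} (ha : a = y 0)
    (h : toLex x ≤ toLex (shift y 1)) : toLex (prepend [a] x) ≤ toLex y := by
  rcases h.lt_or_eq with hlt | heq
  · obtain ⟨p, hagree, hp⟩ := toLex_lt_toLex_iff.1 hlt
    refine le_of_lt (toLex_lt_toLex_iff.2 ⟨p + 1, fun j hj => ?_, ?_⟩)
    · rcases j with _ | j
      · exact ha
      · rw [prepend_singleton_succ, hagree j (by omega), shift_apply, Nat.add_comm]
    · rwa [prepend_singleton_succ, ← Nat.add_comm 1]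
  · refine le_of_eq (congrArg toLex (funext fun n => ?_))
    rcases n with _ | n
    · exact ha
    · rw [prepend_singleton_succ, toLex_inj.1 heq, shift_apply, Nat.add_comm]

lemma toLex_lt_of_eq_false {x y : ℕ → Bool} {n : ℕ} (hx : ∀ j < n, x j = false)
    (hy : ∃ j < n, y j = true) : toLex x < toLex y := by
  classical
  have hp := Nat.find_spec hy
  refine toLex_lt_toLex_iff.2 ⟨Nat.find hy, fun j hj => ?_, ?_⟩
  · have hyj : ¬(j < n ∧ y j = true) := Nat.find_min hy hj
    rw [hx j (by omega), eq_comm, Bool.eq_false_iff]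
    exact fun h => hyj ⟨by omega, h⟩
  · rw [hx _ hp.1, hp.2]
    exact Bool.false_lt_true

end Words

section BlockSubstitution

variable {A B : Type*}

/-- The image of `x` under the uniform morphism `a ↦ (σ a).1 (σ a).2`. -/
def blockSubst (σ : A → B × B) (x : ℕ → A) : ℕ → B :=
  fun n => if n % 2 = 0 then (σ (x (n / 2))).1 else (σ (x (n / 2))).2

variable (σ : A → B × B) (x : ℕ → A)

@[simp] lemma blockSubst_two_mul (k : ℕ) : blockSubst σ x (2 * k) = (σ (x k)).1 := by
  simp [blockSubst]

@[simp] lemma blockSubst_two_mul_add_one (k : ℕ) :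
    blockSubst σ x (2 * k + 1) = (σ (x k)).2 := by
  simp [blockSubst, Nat.add_mod, Nat.add_div]

lemma shift_blockSubst (t : ℕ) : shift (blockSubst σ x) (2 * t) = blockSubst σ (shift x t) := by
  funext n
  simp only [shift_apply, blockSubst]
  rw [show (2 * t + n) / 2 = t + n / 2 by omega, show (2 * t + n) % 2 = n % 2 by omega]

lemma comp_blockSubst {C : Type*} (c : B → C) :
    c ∘ blockSubst σ x = blockSubst (Prod.map c c ∘ σ) x := by
  funext n
  simp only [comp_apply, blockSubst]
  split_ifs <;> rfl

lemma blockSubst_eq_of_eqOn {y : ℕ → A} {m : ℕ} (h : ∀ j < m, x j = y j) :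
    ∀ j < 2 * m, blockSubst σ x j = blockSubst σ y j := by
  intro j hj
  simp only [blockSubst, h (j / 2) (by omega)]

lemma applyMorphism_wordPrefix {f : A → List B} (hf : ∀ a, f a = [(σ a).1, (σ a).2]) (n : ℕ) :
    applyMorphism f (wordPrefix x n) = wordPrefix (blockSubst σ x) (2 * n) := by
  induction n with
  | zero => rfl
  | succ n ih =>
    rw [wordPrefix_succ, show 2 * (n + 1) = 2 * n + 1 + 1 by ring, wordPrefix_succ,
      wordPrefix_succ, ← ih]
    simp [applyMorphism, hf]

lemma eq_blockSubst_of_isWordImage {f : A → List B} (hf : ∀ a, f a = [(σ a).1, (σ a).2])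
    {y : ℕ → B} (h : IsWordImage f x y) : y = blockSubst σ x := by
  funext n
  have hpre := h (n + 1)
  rw [IsPrefixOfWord, applyMorphism_wordPrefix σ x hf] at hpre
  simp only [wordPrefix, List.length_ofFn, List.ofFn_inj] at hpre
  exact congrFun hpre ⟨n, by omega⟩

variable {σ} [LinearOrder A] [LinearOrder B]

lemma toLex_blockSubst_lt (hσ : StrictMono (toLex ∘ σ)) {y : ℕ → A}
    (hxy : toLex x < toLex y) : toLex (blockSubst σ x) < toLex (blockSubst σ y) := by
  obtain ⟨p, hagree, hp⟩ := toLex_lt_toLex_iff.1 hxy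
  have hagree' := blockSubst_eq_of_eqOn σ x hagree
  rcases Prod.Lex.toLex_lt_toLex.1 (hσ hp) with h₁ | ⟨h₁, h₂⟩
  · exact toLex_lt_toLex_iff.2 ⟨2 * p, hagree', by simpa using h₁⟩
  · refine toLex_lt_toLex_iff.2 ⟨2 * p + 1, fun j hj => ?_, by simpa using h₂⟩
    rcases (show j < 2 * p ∨ j = 2 * p by omega) with hj | rfl
    · exact hagree' j hj
    · simpa using h₁

lemma toLex_blockSubst_le (hσ : StrictMono (toLex ∘ σ)) {y : ℕ → A}
    (hxy : toLex x ≤ toLex y) : toLex (blockSubst σ x) ≤ toLex (blockSubst σ y) := by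
  rcases hxy.lt_or_eq with h | h
  · exact (toLex_blockSubst_lt x hσ h).le
  · rw [toLex_inj.1 h]

end BlockSubstitution

section RudinShapiro

def rsPair : Fin 4 → Fin 4 × Fin 4 := ![(0, 1), (0, 2), (3, 1), (3, 2)]

lemma rsMorph_eq_rsPair : ∀ a, rsMorph a = [(rsPair a).1, (rsPair a).2] := by decide

lemma strictMono_rsPair : StrictMono (toLex ∘ rsPair) := by decide

lemma strictMono_rsCoding_rsPair :
    StrictMono (toLex ∘ Prod.map rsCoding rsCoding ∘ rsPair) := by
  decide

variable {u : ℕ → Fin 4}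

lemma rs_two_mul (hu : u = blockSubst rsPair u) (k : ℕ) : u (2 * k) = (rsPair (u k)).1 :=
  (congrFun hu _).trans (blockSubst_two_mul _ _ _)

lemma rs_two_mul_add_one (hu : u = blockSubst rsPair u) (k : ℕ) :
    u (2 * k + 1) = (rsPair (u k)).2 :=
  (congrFun hu _).trans (blockSubst_two_mul_add_one _ _ _)

lemma rs_one (hu : u = blockSubst rsPair u) (h0 : u 0 = 0) : u 1 = 1 := by
  simpa [h0, rsPair] using rs_two_mul_add_one hu 0

lemma rs_two (hu : u = blockSubst rsPair u) (h0 : u 0 = 0) : u 2 = 0 := by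
  simpa [rs_one hu h0, rsPair] using rs_two_mul hu 1

lemma even_of_rs_eq_zero (hu : u = blockSubst rsPair u) {m : ℕ} (hm : u m = 0) : Even m := by
  by_contra hodd
  obtain ⟨k, rfl⟩ := Nat.not_even_iff_odd.1 hodd
  rw [rs_two_mul_add_one hu] at hm
  exact (by decide : ∀ a, (rsPair a).2 ≠ 0) _ hm

lemma rs_eqOn_shift_two_mul (hu : u = blockSubst rsPair u) {t m : ℕ}
    (h : ∀ j < m, u j = u (t + j)) : ∀ j < 2 * m, u j = u (2 * t + j) := by
  intro j hj
  have := blockSubst_eq_of_eqOn rsPair u (y := shift u t) h j hj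
  rwa [← shift_blockSubst, ← hu] at this

lemma toLex_le_toLex_shift_rs (hu : u = blockSubst rsPair u) (h0 : u 0 = 0) (t : ℕ) :
    toLex u ≤ toLex (shift u t) := by
  induction t using Nat.strong_induction_on with
  | _ t ih =>
  by_cases ht : u t = 0
  · obtain ⟨s, rfl⟩ := even_of_rs_eq_zero hu ht
    rcases Nat.eq_zero_or_pos s with rfl | hs
    · exact le_of_eq (congrArg toLex (funext fun n => by simp))
    · have := toLex_blockSubst_le u strictMono_rsPair (ih s (by omega))
      rwa [← shift_blockSubst, ← hu, two_mul] at this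
  · refine le_of_lt (toLex_lt_toLex_iff.2 ⟨0, by simp, ?_⟩)
    rw [h0, shift_apply, Nat.add_zero]
    exact Fin.pos_iff_ne_zero.2 ht

lemma toLex_rsCoding_le_shift_two_mul (hu : u = blockSubst rsPair u) (h0 : u 0 = 0) (t : ℕ) :
    toLex (rsCoding ∘ u) ≤ toLex (shift (rsCoding ∘ u) (2 * t)) := by
  have := toLex_blockSubst_le u strictMono_rsCoding_rsPair (toLex_le_toLex_shift_rs hu h0 t)
  rwa [← comp_blockSubst, ← comp_blockSubst, ← shift_blockSubst, ← hu] at this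

lemma odd_of_rsCoding_eq_false (hu : u = blockSubst rsPair u) {i : ℕ}
    (h : ∀ j < 4, rsCoding (u (i + j)) = false) : Odd i := by
  by_contra heven
  obtain ⟨k, rfl⟩ := Nat.not_odd_iff_even.1 heven
  have hzero : ∀ n, rsCoding (u (2 * n)) = false → rsCoding (u (2 * n + 1)) = false →
      u n = 0 := by
    intro n
    rw [rs_two_mul hu, rs_two_mul_add_one hu]
    exact (by decide : ∀ a, rsCoding (rsPair a).1 = false → rsCoding (rsPair a).2 = false →
      a = 0) _
  simp only [← two_mul] at h
  have hk := hzero k (h 0 (by norm_num)) (h 1 (by norm_num))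
  have hk1 := hzero (k + 1) (h 2 (by norm_num)) (h 3 (by norm_num))
  exact Nat.even_add_one.1 (even_of_rs_eq_zero hu hk1) (even_of_rs_eq_zero hu hk)

lemma toLex_prepend_le_shift_rsCoding (hu : u = blockSubst rsPair u) (h0 : u 0 = 0) (i : ℕ) :
    toLex (prepend [false] (rsCoding ∘ u)) ≤ toLex (shift (rsCoding ∘ u) i) := by
  by_cases h : ∀ j < 4, rsCoding (u (i + j)) = false
  · obtain ⟨s, rfl⟩ := odd_of_rsCoding_eq_false hu h
    refine toLex_prepend_le (h 0 (by norm_num)).symm ?_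
    rw [shift_shift, show 2 * s + 1 + 1 = 2 * (s + 1) by ring]
    exact toLex_rsCoding_le_shift_two_mul hu h0 (s + 1)
  · push Not at h
    refine le_of_lt (toLex_lt_of_eq_false (n := 4) (fun j hj => ?_) (by simpa using h))
    interval_cases j <;> simp [h0, rs_one hu h0, rs_two hu h0, rsCoding]

lemma exists_rs_eq_one_eqOn_shift (hu : u = blockSubst rsPair u) (h0 : u 0 = 0) (N : ℕ) :
    ∃ k, u k = 1 ∧ ∀ j < N, u j = u (k + 1 + j) := by
  suffices ∀ n, ∃ k, u k = 1 ∧ ∀ j < 4 ^ n, u j = u (k + 1 + j) by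
    obtain ⟨k, hk, hN⟩ := this N
    exact ⟨k, hk, fun j hj => hN j (hj.trans (Nat.lt_pow_self (by norm_num)))⟩
  intro n
  induction n with
  | zero =>
    refine ⟨1, rs_one hu h0, fun j hj => ?_⟩
    obtain rfl : j = 0 := by simpa using hj
    rw [h0, rs_two hu h0]
  | succ n ih =>
    obtain ⟨k, hk, hagree⟩ := ih
    -- the letter `1` at `k` becomes `f(1) = 02`, and then the `2` becomes `f(2) = 31`
    refine ⟨2 * (2 * k + 1) + 1, ?_, fun j hj => ?_⟩
    · simp [rs_two_mul_add_one hu, hk, rsPair]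
    · have h₁ := rs_eqOn_shift_two_mul hu (rs_eqOn_shift_two_mul hu hagree)
      rw [h₁ j (by rw [pow_succ] at hj; omega)]
      ring_nf

lemma inOrbitClosure_prepend_rsCoding (hu : u = blockSubst rsPair u) (h0 : u 0 = 0) :
    InOrbitClosure (prepend [false] (rsCoding ∘ u)) (rsCoding ∘ u) := by
  refine inOrbitClosure_of_forall_isFactor_wordPrefix fun n => ?_
  obtain ⟨k, hk, hagree⟩ := exists_rs_eq_one_eqOn_shift hu h0 n
  refine isFactor_wordPrefix_iff.2 ⟨k, fun j hj => ?_⟩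
  rcases j with _ | j
  · simp [hk, rsCoding]
  · simp [hagree j (by omega), Nat.add_right_comm k 1 j, Nat.add_assoc]

end RudinShapiro

theorem stmt17 (u : ℕ → Fin 4) (hu : IsPureMorphic rsMorph 0 u) :
    InOrbitClosure (prepend [false] (rsCoding ∘ u)) (rsCoding ∘ u) ∧
    ∀ y : ℕ → Bool, InOrbitClosure y (rsCoding ∘ u) →
      LexLe (· < ·) (prepend [false] (rsCoding ∘ u)) y := by
  obtain ⟨h0, -, himg⟩ := hu
  have hfix : u = blockSubst rsPair u :=
    eq_blockSubst_of_isWordImage rsPair u rsMorph_eq_rsPair himg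
  exact ⟨inOrbitClosure_prepend_rsCoding hfix h0, fun y hy => lexLe_iff_toLex_le.2
    (toLex_le_of_inOrbitClosure (toLex_prepend_le_shift_rsCoding hfix h0) hy)⟩
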